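/- arXiv:0712.1519 — 8 statements merged into one kernel-verified Lean document; each statement's English description precedes it below -/
import Mathlib

section
/- In a meet semi-lattice (S, ≼) with least element m, if x is an F-meeting point for a function F : S → S, then inf(x, F(x)) is also an F-meeting point. -/
/-- `x` is an `F`-meeting point: `x ≠ ⊥`, and for every finite ≼-chain
    `⊥ ≠ x₁ ≼ ⋯ ≼ xₙ ≼ x`, the infimum `inf (F x₁, …, F xₙ, x)` is not `⊥`. -/
def IsMeetingPoint {S : Type*} [SemilatticeInf S] [OrderBot S] (F : S → S) (x : S) : Prop :=
  x ≠ ⊥ ∧ ∀ (n : ℕ) (c : Fin (n + 1) → S), Monotone c → c 0 ≠ ⊥ → c (Fin.last n) ≤ x →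
    (Finset.univ.inf' Finset.univ_nonempty fun i => F (c i)) ⊓ x ≠ ⊥

theorem stmt0 {S : Type*} [SemilatticeInf S] [OrderBot S] (F : S → S) (x : S)
    (hx : IsMeetingPoint F x) : IsMeetingPoint F (x ⊓ F x) := by
  obtain ⟨hxne, hchain⟩ := hx
  constructor
  · have h := hchain 0 (fun _ => x) monotone_const hxne le_rfl
    simp only [Finset.inf'_const] at h
    rw [inf_comm]
    exact h
  · intro n c hmono h0 hlast
    set c' : Fin (n + 1 + 1) → S := Fin.snoc c x with hc'
    have hcast : ∀ i : Fin (n + 1), c' i.castSucc = c i := fun i => Fin.snoc_castSucc ..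
    have hlast' : c' (Fin.last (n + 1)) = x := Fin.snoc_last ..
    have hmono' : Monotone c' := by
      rw [Fin.monotone_iff_le_succ]
      intro i
      refine Fin.lastCases ?_ ?_ i
      · rw [Fin.succ_last, hlast', hcast]
        exact hlast.trans inf_le_left
      · intro j
        rw [Fin.succ_castSucc, hcast, hcast]
        exact hmono (Fin.castSucc_le_succ j)
    have h0' : c' 0 ≠ ⊥ := by
      have : (0 : Fin (n + 1 + 1)) = (0 : Fin (n + 1)).castSucc := rfl
      rw [this, hcast]; exact h0
    have h := hchain (n + 1) c' hmono' h0' (hlast'.le)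
    intro hcontra
    apply h
    rw [← le_bot_iff, ← hcontra]
    refine le_inf ?_ (le_inf ?_ ?_)
    · refine Finset.le_inf' _ _ fun i _ => ?_
      exact inf_le_left.trans ((Finset.inf'_le _ (Finset.mem_univ i.castSucc)).trans (by rw [hcast]))
    · exact inf_le_right
    · exact inf_le_left.trans ((Finset.inf'_le _ (Finset.mem_univ (Fin.last (n+1)))).trans (by rw [hlast']))
end

section
/- Let (S, ≼) be a meet semi-lattice with least element m such that ≼ is well-founded (there is no infinite strictly decreasing sequence), and let F : S → S. If there exists an F-meeting point, then there exists y ≠ m with y ≼ F(y), i.e., a nontrivial pre-fixed point of F. -/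
section MeetIter

variable {S : Type*} [SemilatticeInf S] (F : S → S) (x : S)

def meetIter : ℕ → S
  | 0 => x
  | n + 1 => meetIter n ⊓ F (meetIter n)

theorem meetIter_antitone : Antitone (meetIter F x) :=
  antitone_nat_of_succ_le fun _ => inf_le_left

variable {F x}

theorem le_meetIter_succ {t : S} (htx : t ≤ x) :
    ∀ {k : ℕ}, (∀ j ≤ k, t ≤ F (meetIter F x j)) → t ≤ meetIter F x (k + 1)
  | 0, htF => le_inf htx (htF 0 le_rfl)
  | k + 1, htF =>
    le_inf (le_meetIter_succ htx fun j hj => htF j (hj.trans k.le_succ)) (htF (k + 1) le_rfl)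

theorem IsMeetingPoint.meetIter_ne_bot [OrderBot S] (hx : IsMeetingPoint F x) :
    ∀ k, meetIter F x k ≠ ⊥
  | 0 => hx.1
  | k + 1 => by
    set c : Fin (k + 1) → S := fun i => meetIter F x (Fin.rev i) with hc
    have hc_mono : Monotone c := fun i j hij =>
      meetIter_antitone F x (Fin.rev_le_rev.mpr hij)
    have hc_last : c (Fin.last k) ≤ x := by simp [hc, meetIter]
    have hinf_le : (Finset.univ.inf' Finset.univ_nonempty fun i => F (c i)) ⊓ x ≤
        meetIter F x (k + 1) := by
      refine le_meetIter_succ inf_le_right fun j hj => inf_le_left.trans ?_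
      have hcj : c (Fin.rev ⟨j, Nat.lt_succ_of_le hj⟩) = meetIter F x j := by
        simp [hc, Nat.sub_sub_self hj]
      exact hcj ▸ Finset.inf'_le _ (Finset.mem_univ _)
    exact fun hbot => hx.2 k c hc_mono (by simpa [hc] using hx.meetIter_ne_bot k) hc_last
      (eq_bot_mono hinf_le hbot)

end MeetIter

theorem stmt1 {S : Type*} [SemilatticeInf S] [OrderBot S]
    (hwf : WellFounded ((· < ·) : S → S → Prop)) (F : S → S)
    (hmp : ∃ x, IsMeetingPoint F x) :
    ∃ y, y ≠ ⊥ ∧ y ≤ F y := by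
  obtain ⟨x, hx⟩ := hmp
  have : WellFoundedLT S := ⟨hwf⟩
  obtain ⟨k, hk⟩ := WellFoundedLT.antitone_chain_condition (meetIter_antitone F x)
  have hfix : meetIter F x k ⊓ F (meetIter F x k) = meetIter F x k := (hk (k + 1) k.le_succ).symm
  exact ⟨meetIter F x k, hx.meetIter_ne_bot k, inf_eq_left.mp hfix⟩
end

section
/- Let E be a finite nonempty set of functions of type A → B, let ≺ be an irreflexive transitive relation on B, and let ∅ ≠ A₀ ⊆ A₁ ⊆ ... ⊆ Aₙ ⊆ A be a chain of subsets of A. Then there exists f ∈ E that is simultaneously maximal in E with respect to each extended order ≺^{A₀}, ..., ≺^{Aₙ}. -/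
/-- The extension of a relation `r` on `B` to functions `A → B`, relative to
    a subset `A'` of the domain. -/
def precOn {A B : Type*} (r : B → B → Prop) (A' : Set A) (f f' : A → B) : Prop :=
  (∀ x ∈ A', r (f x) (f' x) ∨ f x = f' x) ∧ ∃ x ∈ A', r (f x) (f' x)

/-!
Select lexicographically: keep the `≺^{A₀}`-maximal elements of `E` and recurse on the shorter
chain `A₁ ⊆ ⋯ ⊆ Aₙ`. This loses nothing, because if `f` is `≺^{A₀}`-maximal in `E` and
`f ≺^{Aᵢ} g` for some `g ∈ E` with `A₀ ⊆ Aᵢ`, then `f` and `g` agree on `A₀`, so `g` is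
`≺^{A₀}`-maximal as well.
-/

def undominated {α : Type*} (s : α → α → Prop) (E : Set α) : Set α :=
  {f ∈ E | ∀ g ∈ E, ¬ s f g}

theorem undominated_subset {α : Type*} (s : α → α → Prop) (E : Set α) :
    undominated s E ⊆ E :=
  Set.sep_subset _ _

theorem Set.Finite.undominated_nonempty {α : Type*} {s : α → α → Prop} [IsStrictOrder α s]
    {E : Set α} (hE : E.Finite) (hne : E.Nonempty) : (undominated s E).Nonempty := by
  have : IsStrictOrder α (flip s) :=
    { irrefl := irrefl_of s, trans := fun _ _ _ h₁ h₂ => _root_.trans_of s h₂ h₁ }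
  obtain ⟨f, hf, hmax⟩ := (hE.wellFoundedOn (r := flip s)).has_min Set.univ
    (let ⟨f, hf⟩ := hne; ⟨⟨f, hf⟩, trivial⟩)
  exact ⟨f, f.2, fun g hg hfg => hmax ⟨g, hg⟩ trivial hfg⟩

section precOn

variable {A B : Type*} {r : B → B → Prop}

instance precOn.isStrictOrder [IsStrictOrder B r] (A' : Set A) :
    IsStrictOrder (A → B) (precOn r A') where
  irrefl _ := fun ⟨_, _, _, hx⟩ => irrefl _ hx
  trans f g h := by
    rintro ⟨hfg, x, hx, hrx⟩ ⟨hgh, -⟩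
    refine ⟨fun y hy => ?_, x, hx, ?_⟩
    · rcases hfg y hy with h₁ | h₁ <;> rcases hgh y hy with h₂ | h₂
      · exact .inl (_root_.trans h₁ h₂)
      · exact .inl (h₂ ▸ h₁)
      · exact .inl (h₁ ▸ h₂)
      · exact .inr (h₁.trans h₂)
    · rcases hgh x hx with h₂ | h₂
      · exact _root_.trans hrx h₂
      · exact h₂ ▸ hrx

theorem precOn_congr_left {A' : Set A} {f g h : A → B} (hfg : Set.EqOn f g A') :
    precOn r A' f h ↔ precOn r A' g h := by
  suffices ∀ {f g : A → B}, Set.EqOn f g A' → precOn r A' f h → precOn r A' g h from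
    ⟨this hfg, this hfg.symm⟩
  rintro f g hfg ⟨h₁, x, hx, h₂⟩
  exact ⟨fun y hy => hfg hy ▸ h₁ y hy, x, hx, hfg hx ▸ h₂⟩

theorem precOn.mono_of_rel {A' A'' : Set A} {f g : A → B} (h : precOn r A'' f g)
    (hA : A' ⊆ A'') {x : A} (hx : x ∈ A') (hrx : r (f x) (g x)) : precOn r A' f g :=
  ⟨fun y hy => h.1 y (hA hy), x, hx, hrx⟩

theorem precOn.eqOn_of_mem_undominated {A' A'' : Set A} {E : Set (A → B)} {f g : A → B}
    (h : precOn r A'' f g) (hA : A' ⊆ A'') (hf : f ∈ undominated (precOn r A') E) (hg : g ∈ E) :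
    Set.EqOn f g A' := fun x hx =>
  (h.1 x (hA hx)).resolve_left fun hrx => hf.2 g hg (h.mono_of_rel hA hx hrx)

theorem mem_undominated_of_precOn {A' A'' : Set A} {E : Set (A → B)} {f g : A → B}
    (h : precOn r A'' f g) (hA : A' ⊆ A'') (hf : f ∈ undominated (precOn r A') E) (hg : g ∈ E) :
    g ∈ undominated (precOn r A') E :=
  ⟨hg, fun k hk hgk =>
    hf.2 k hk ((precOn_congr_left (h.eqOn_of_mem_undominated hA hf hg)).2 hgk)⟩

theorem exists_forall_undominated_precOn [IsStrictOrder B r] {E : Set (A → B)} (hE : E.Finite)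
    (hne : E.Nonempty) {n : ℕ} (Ach : Fin (n + 1) → Set A) (hmono : Monotone Ach) :
    ∃ f ∈ E, ∀ i, f ∈ undominated (precOn r (Ach i)) E := by
  induction n generalizing E with
  | zero =>
    obtain ⟨f, hf⟩ := hE.undominated_nonempty (s := precOn r (Ach 0)) hne
    exact ⟨f, hf.1, fun i => (Fin.fin_one_eq_zero i).symm ▸ hf⟩
  | succ n ih =>
    obtain ⟨f, hf₀, hf⟩ := ih (hE.subset (undominated_subset _ _))
      (hE.undominated_nonempty (s := precOn r (Ach 0)) hne) (Ach ∘ Fin.succ)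
      (hmono.comp Fin.strictMono_succ.monotone)
    refine ⟨f, hf₀.1, Fin.cases hf₀ fun j => ⟨hf₀.1, fun g hg hfg => ?_⟩⟩
    exact (hf j).2 g (mem_undominated_of_precOn hfg (hmono (Fin.zero_le _)) hf₀ hg) hfg

end precOn

theorem stmt3_general {A B : Type*} (r : B → B → Prop)
    (hirr : ∀ b, ¬ r b b) (htr : ∀ {x y z : B}, r x y → r y z → r x z)
    (E : Set (A → B)) (hEfin : E.Finite) (hEne : E.Nonempty)
    (n : ℕ) (Ach : Fin (n + 1) → Set A) (hmono : Monotone Ach) :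
    ∃ f ∈ E, ∀ i : Fin (n + 1), ∀ g ∈ E, ¬ precOn r (Ach i) f g := by
  have : IsStrictOrder B r := { irrefl := hirr, trans := fun _ _ _ => htr }
  obtain ⟨f, hf, hmax⟩ := exists_forall_undominated_precOn (r := r) hEfin hEne Ach hmono
  exact ⟨f, hf, fun i => (hmax i).2⟩

theorem stmt3 {A B : Type*} (r : B → B → Prop)
    (hirr : ∀ b, ¬ r b b) (htr : ∀ {x y z : B}, r x y → r y z → r x z)
    (E : Set (A → B)) (hEfin : E.Finite) (hEne : E.Nonempty)
    (n : ℕ) (Ach : Fin (n + 1) → Set A) (hmono : Monotone Ach)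
    (h0 : (Ach 0).Nonempty) :
    ∃ f ∈ E, ∀ i : Fin (n + 1), ∀ g ∈ E, ¬ precOn r (Ach i) f g :=
  stmt3_general r hirr htr E hEfin hEne n Ach hmono
end

section
/- Let ⟨(S^i_a), (BR_a)⟩ be an ndbr multi strategic game with finitely many agents, finitely many indices, and finite strategy sets. Suppose there exists σ ∈ Σ such that for all agents a and all γ₁, ..., γₙ ∈ Σ_{-a} with γₙ ⊆ ... ⊆ γ₁ ⊆ σ_{-a}, the intersection (⋂_{1≤k≤n} BR_a(γ_k)) ∩ σ_a is nonempty. Then the game has an ndbr equilibrium, i.e., there exists τ ∈ Σ with τ ⊆ BR(τ). -/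
/-- The nd strategy profile of the opponents of `a`. -/
def minusA {A I : Type*} {S : A → I → Type*} (σ : ∀ a i, Set (S a i)) (a : A) :
    ∀ a' : {x : A // x ≠ a}, ∀ i, Set (S a'.1 i) :=
  fun a' i => σ a'.1 i

/-- Iterated best-response intersection sequence. -/
def brSeq {A I : Type*} {S : A → I → Type*}
    (BR : ∀ a : A, (∀ a' : {x : A // x ≠ a}, ∀ i, Set (S a'.1 i)) → (∀ i, Set (S a i)))
    (σ : ∀ a i, Set (S a i)) : ℕ → ∀ a i, Set (S a i)
  | 0 => σ
  | n + 1 => fun a i =>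
      (⋂ k : Fin (n + 1), BR a (minusA (brSeq BR σ k.1) a) i) ∩ σ a i
  termination_by n => n
  decreasing_by exact k.isLt

theorem stmt5 {A I : Type*} [Nonempty A] [Nonempty I] [Finite A] [Finite I]
    {S : A → I → Type*} [∀ a i, Nonempty (S a i)] [∀ a i, Finite (S a i)]
    (BR : ∀ a : A, (∀ a' : {x : A // x ≠ a}, ∀ i, Set (S a'.1 i)) → (∀ i, Set (S a i)))
    (hBR : ∀ a γ, (∀ a' i, (γ a' i).Nonempty) → ∀ i, (BR a γ i).Nonempty)
    (σ : ∀ a i, Set (S a i)) (hσ : ∀ a i, (σ a i).Nonempty)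
    (hmeet : ∀ (a : A) (n : ℕ)
      (γ : Fin (n + 1) → ∀ a' : {x : A // x ≠ a}, ∀ i, Set (S a'.1 i)),
      (∀ k a' i, (γ k a' i).Nonempty) →
      (∀ k l : Fin (n + 1), k ≤ l → ∀ a' i, γ l a' i ⊆ γ k a' i) →
      (∀ a' i, γ 0 a' i ⊆ σ a'.1 i) →
      ∀ i, ((⋂ k, BR a (γ k) i) ∩ σ a i).Nonempty) :
    ∃ τ : ∀ a i, Set (S a i), (∀ a i, (τ a i).Nonempty) ∧
      ∀ a i, τ a i ⊆ BR a (minusA τ a) i := by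
  set T := brSeq BR σ with hT
  have hT0 : T 0 = σ := by rw [hT]; rw [brSeq]
  -- T n ⊆ σ
  have hsub : ∀ n a i, T n a i ⊆ σ a i := by
    intro n a i
    cases n with
    | zero => rw [hT0]
    | succ m => rw [hT, brSeq]; exact Set.inter_subset_right
  -- antitone step
  have hstep : ∀ n a i, T (n + 1) a i ⊆ T n a i := by
    intro n a i
    cases n with
    | zero => rw [show (0:ℕ)+1 = 1 from rfl, hT0]; exact hsub 1 a i
    | succ m =>
      intro x hx
      rw [hT, brSeq] at hx ⊢
      obtain ⟨hx1, hx2⟩ := hx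
      refine ⟨?_, hx2⟩
      simp only [Set.mem_iInter] at hx1 ⊢
      intro k
      exact hx1 ⟨k.1, Nat.lt_succ_of_lt k.isLt⟩
  have hmono : ∀ m n : ℕ, m ≤ n → ∀ a i, T n a i ⊆ T m a i := by
    intro m n hmn
    induction n with
    | zero => simp_all
    | succ p ih =>
      rcases Nat.lt_or_ge m (p + 1) with h | h
      · intro a i
        exact (hstep p a i).trans (ih (Nat.lt_succ_iff.mp h) a i)
      · have : m = p + 1 := le_antisymm hmn h
        subst this; intro a i; exact le_rfl
  -- nonemptiness
  have hne : ∀ n a i, (T n a i).Nonempty := by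
    intro n
    induction n using Nat.strong_induction_on with
    | _ n ih =>
      cases n with
      | zero => intro a i; rw [hT0]; exact hσ a i
      | succ m =>
        intro a i
        have := hmeet a m (fun k : Fin (m + 1) => minusA (T k.1) a)
          (fun k a' i => ih k.1 k.isLt a'.1 i)
          (fun k l hkl a' i => hmono k.1 l.1 hkl a'.1 i)
          (fun a' i => by simpa [minusA, hT0] using hsub 0 a'.1 i) i
        rw [hT, brSeq]
        exact this
  -- stabilization by finiteness
  obtain ⟨m, n, hne', heq⟩ := Finite.exists_ne_map_eq_of_infinite T
  wlog hmn : m < n generalizing m n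
  · exact this n m (Ne.symm hne') heq.symm (by omega)
  -- T m = T (m+1)
  have hfix : T m = T (m + 1) := by
    funext a i
    apply le_antisymm
    · intro x hx
      have h1 : T n a i ⊆ T (m + 1) a i := hmono (m + 1) n hmn a i
      rw [← heq] at h1
      exact h1 hx
    · exact hstep m a i
  refine ⟨T m, hne m, fun a i => ?_⟩
  intro x hx
  rw [hfix] at hx
  rw [hT, brSeq] at hx
  obtain ⟨hx1, _⟩ := hx
  simp only [Set.mem_iInter] at hx1
  exact hx1 (Fin.last m)
end

section
/- Let g be a finite abstract strategic game with strict partial order preferences, and define BR³_a(γ) = {s ∈ S_a | ∃ c ∈ γ, ∀ s' ∈ S_a, ¬(s ≺^{{c}}_a s')}. If σ and σ' are ndbr equilibria with respect to BR³, then so is their Cartesian union σ ∪^× σ' (the profile whose component for each agent a is σ_a ∪ σ'_a). -/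
/-- The profile `(c ; s)` where the opponents of `a` play `c` and `a` plays `s`. -/
def combine {A : Type*} [DecidableEq A] {S : A → Type*} (a : A) (s : S a)
    (c : ∀ b : {x : A // x ≠ a}, S b.1) : ∀ b, S b :=
  fun b => if h : b = a then cast (congrArg S h).symm s else c ⟨b, h⟩

/-- The set of opponents' partial profiles compatible with `γ ∈ Σ_{-a}`. -/
def gammaSet {A : Type*} {S : A → Type*} (a : A)
    (γ : ∀ b : {x : A // x ≠ a}, Set (S b.1)) : Set (∀ b : {x : A // x ≠ a}, S b.1) :=
  {c | ∀ b, c b ∈ γ b}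

/-- `BR³_a(γ) = {s ∈ S_a | ∃ c ∈ γ, ∀ s' ∈ S_a, ¬(s ≺^{{c}}_a s')}`. -/
def BR3 {A Oc : Type*} [DecidableEq A] {S : A → Type*} (P : (∀ b, S b) → Oc)
    (prec : A → Oc → Oc → Prop) (a : A)
    (γ : ∀ b : {x : A // x ≠ a}, Set (S b.1)) : Set (S a) :=
  {s | ∃ c ∈ gammaSet a γ, ∀ s', ¬ prec a (P (combine a s c)) (P (combine a s' c))}

theorem stmt9 {A Oc : Type*} [DecidableEq A] [Nonempty A] [Finite A]
    {S : A → Type*} [∀ a, Nonempty (S a)] [∀ a, Finite (S a)]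
    (P : (∀ b, S b) → Oc) (prec : A → Oc → Oc → Prop)
    (hirr : ∀ a oc, ¬ prec a oc oc)
    (htr : ∀ a, Transitive (prec a))
    (σ σ' : ∀ a, Set (S a)) (hσ : ∀ a, (σ a).Nonempty) (hσ' : ∀ a, (σ' a).Nonempty)
    (heq : ∀ a, σ a ⊆ BR3 P prec a (fun b => σ b.1))
    (heq' : ∀ a, σ' a ⊆ BR3 P prec a (fun b => σ' b.1)) :
    (∀ a, ((σ a ∪ σ' a) : Set (S a)).Nonempty) ∧
      ∀ a, σ a ∪ σ' a ⊆ BR3 P prec a (fun b => σ b.1 ∪ σ' b.1) := by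
  refine ⟨fun a => (hσ a).mono Set.subset_union_left, fun a s hs => ?_⟩
  rcases hs with hs | hs
  · obtain ⟨c, hc, h2⟩ := heq a hs
    exact ⟨c, fun b => Or.inl (hc b), h2⟩
  · obtain ⟨c, hc, h2⟩ := heq' a hs
    exact ⟨c, fun b => Or.inr (hc b), h2⟩
end

section
/- Let g be a finite abstract strategic game with strict partial order preferences, and define BR⁴_a(γ) = {s ∈ S_a | ∀ s' ∈ S_a, ∃ c ∈ γ, ¬(s ≺^{{c}}_a s')}. If σ and σ' are ndbr equilibria with respect to BR⁴, then so is their Cartesian union σ ∪^× σ'. -/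
/-- `BR⁴_a(γ) = {s ∈ S_a | ∀ s' ∈ S_a, ∃ c ∈ γ, ¬(s ≺^{{c}}_a s')}`. -/
def BR4 {A Oc : Type*} [DecidableEq A] {S : A → Type*} (P : (∀ b, S b) → Oc)
    (prec : A → Oc → Oc → Prop) (a : A)
    (γ : ∀ b : {x : A // x ≠ a}, Set (S b.1)) : Set (S a) :=
  {s | ∀ s', ∃ c ∈ gammaSet a γ, ¬ prec a (P (combine a s c)) (P (combine a s' c))}

theorem stmt10 {A Oc : Type*} [DecidableEq A] [Nonempty A] [Finite A]
    {S : A → Type*} [∀ a, Nonempty (S a)] [∀ a, Finite (S a)]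
    (P : (∀ b, S b) → Oc) (prec : A → Oc → Oc → Prop)
    (hirr : ∀ a oc, ¬ prec a oc oc)
    (htr : ∀ a, Transitive (prec a))
    (σ σ' : ∀ a, Set (S a)) (hσ : ∀ a, (σ a).Nonempty) (hσ' : ∀ a, (σ' a).Nonempty)
    (heq : ∀ a, σ a ⊆ BR4 P prec a (fun b => σ b.1))
    (heq' : ∀ a, σ' a ⊆ BR4 P prec a (fun b => σ' b.1)) :
    (∀ a, ((σ a ∪ σ' a) : Set (S a)).Nonempty) ∧
      ∀ a, σ a ∪ σ' a ⊆ BR4 P prec a (fun b => σ b.1 ∪ σ' b.1) := by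
  refine ⟨fun a => (hσ a).mono Set.subset_union_left, fun a s hs s' => ?_⟩
  rcases hs with hs | hs
  · obtain ⟨c, hc, h⟩ := heq a hs s'
    exact ⟨c, fun b => Or.inl (hc b), h⟩
  · obtain ⟨c, hc, h⟩ := heq' a hs s'
    exact ⟨c, fun b => Or.inr (hc b), h⟩
end

section
/- In a multi strategic game, let γ ⊆ δ be elements of Σ_{-a} (componentwise inclusion of the other agents' nd strategies). If seq(δ; σ_a, n) ≺^{fct}_a seq(δ; σ'_a, n), then seq(γ; σ_a, n) ≺^{fct}_a seq(γ; σ'_a, n). -/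
/-- The induced sequence of sets of outcomes of an nd strategy profile `σ`,
starting at node `n`. -/
def seqOut {V A Oc : Type*} {S : V → A → Type*}
    (P : ∀ n : V, (∀ a, S n a) → Oc × V) (σ : ∀ n a, Set (S n a)) :
    ℕ → V → Set Oc
  | 0, n => (fun x => (P n x).1) '' {x | ∀ a, x a ∈ σ n a}
  | k + 1, n => ⋃ x ∈ {x : ∀ a, S n a | ∀ a, x a ∈ σ n a}, seqOut P σ k (P n x).2

/-- `X ≺^{set} Y`: every element of `X` is `≺`-below every element of `Y`. -/
def setPrec {E : Type*} (r : E → E → Prop) (X Y : Set E) : Prop :=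
  ∀ x ∈ X, ∀ y ∈ Y, r x y

/-- The nd profile `(γ ; σₐ)`: agent `a` plays `σₐ`, the other agents play `γ`. -/
def insNd {V A : Type*} [DecidableEq A] {S : V → A → Type*} (a : A)
    (σa : ∀ n, Set (S n a)) (γ : ∀ n, ∀ b : {x : A // x ≠ a}, Set (S n b.1)) :
    ∀ n b, Set (S n b) :=
  fun n b => if h : b = a then cast (congrArg (fun x => Set (S n x)) h).symm (σa n)
    else γ n ⟨b, h⟩

lemma seqOut_mono {V A Oc : Type*} {S : V → A → Type*}
    (P : ∀ n : V, (∀ a, S n a) → Oc × V) {σ τ : ∀ n a, Set (S n a)}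
    (hst : ∀ n a, σ n a ⊆ τ n a) :
    ∀ k n, seqOut P σ k n ⊆ seqOut P τ k n := by
  intro k
  induction k with
  | zero =>
    intro n o ho
    obtain ⟨x, hx, rfl⟩ := ho
    exact ⟨x, fun b => hst n b (hx b), rfl⟩
  | succ k ih =>
    intro n o ho
    simp only [seqOut, Set.mem_iUnion] at ho ⊢
    obtain ⟨x, hx, ho⟩ := ho
    exact ⟨x, fun b => hst n b (hx b), ih _ ho⟩

lemma insNd_mono {V A : Type*} [DecidableEq A] {S : V → A → Type*} (a : A)
    (σa : ∀ n, Set (S n a)) {γ δ : ∀ n, ∀ b : {x : A // x ≠ a}, Set (S n b.1)}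
    (hsub : ∀ n b, γ n b ⊆ δ n b) :
    ∀ n b, insNd a σa γ n b ⊆ insNd a σa δ n b := by
  intro n b
  unfold insNd
  by_cases h : b = a
  · subst h; simp
  · simpa [h] using hsub n ⟨b, h⟩

theorem stmt17 {V A Oc : Type*} [DecidableEq A] [Nonempty V] [Nonempty A]
    {S : V → A → Type*} [∀ n a, Nonempty (S n a)]
    (P : ∀ n : V, (∀ a, S n a) → Oc × V)
    (prec : A → Oc → Oc → Prop) (a : A)
    (γ δ : ∀ n, ∀ b : {x : A // x ≠ a}, Set (S n b.1))
    (hγ : ∀ n b, (γ n b).Nonempty) (hδ : ∀ n b, (δ n b).Nonempty)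
    (hsub : ∀ n b, γ n b ⊆ δ n b)
    (σa σ'a : ∀ n, Set (S n a))
    (hσa : ∀ n, (σa n).Nonempty) (hσ'a : ∀ n, (σ'a n).Nonempty)
    (n : V)
    (h : ∀ k, setPrec (prec a) (seqOut P (insNd a σa δ) k n)
      (seqOut P (insNd a σ'a δ) k n)) :
    ∀ k, setPrec (prec a) (seqOut P (insNd a σa γ) k n)
      (seqOut P (insNd a σ'a γ) k n) := by
  intro k x hx y hy
  exact h k x (seqOut_mono P (insNd_mono a σa hsub) k n hx)
    y (seqOut_mono P (insNd_mono a σ'a hsub) k n hy)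
end

section
/- Let g be a finite abstract strategic game with strict partial order preferences. Define BR³_a(γ) = {s ∈ S_a | ∃ c ∈ γ, ∀ s' ∈ S_a, ¬(P(c;s) ≺_a P(c;s'))} and the BR game g' with BR'_a(s) = {s_{-a}} × {s' ∈ S_a | ∀ s'' ∈ S_a, ¬(P(s_{-a};s') ≺_a P(s_{-a};s''))}. If C ⊆ S is a strict or-best-response equilibrium of g' (i.e., C = ⋃_{a∈𝒜}⋃_{s∈C} BR'_a(s) and C is strongly connected under the union of the step relations s →_a s' defined by s' ∈ BR'_a(s)), then the projection p(C) = ∏_a {s_a | s ∈ C} is an ndbr equilibrium with respect to BR³, i.e., p_a(C) ⊆ BR³_a(p_{-a}(C)) for all agents a. -/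
/-- `BR'_a(s) = {s_{-a}} × {s' ∈ S_a | ∀ s'', ¬(P(s_{-a};s') ≺_a P(s_{-a};s''))}`,
viewed as a set of full profiles. -/
def BR' {A Oc : Type*} [DecidableEq A] {S : A → Type*} (P : (∀ b, S b) → Oc)
    (prec : A → Oc → Oc → Prop) (a : A) (s : ∀ b, S b) : Set (∀ b, S b) :=
  {s' | (∀ b, b ≠ a → s' b = s b) ∧
    ∀ t : S a, ¬ prec a (P (Function.update s a (s' a))) (P (Function.update s a t))}

/-- One step of the best-response dynamics: some agent moves to a best response. -/
def step {A Oc : Type*} [DecidableEq A] {S : A → Type*} (P : (∀ b, S b) → Oc)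
    (prec : A → Oc → Oc → Prop) (s s' : ∀ b, S b) : Prop :=
  ∃ a, s' ∈ BR' P prec a s

lemma combine_eq_update {A : Type*} [DecidableEq A] {S : A → Type*} (a : A) (t : S a)
    (w : ∀ b, S b) : combine a t (fun b => w b.1) = Function.update w a t := by
  funext b
  by_cases h : b = a
  · subst h; simp [combine, Function.update]
  · simp [combine, Function.update, h]

theorem stmt19 {A Oc : Type*} [DecidableEq A] [Nonempty A] [Finite A]
    {S : A → Type*} [∀ a, Nonempty (S a)] [∀ a, Finite (S a)]
    (P : (∀ b, S b) → Oc) (prec : A → Oc → Oc → Prop)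
    (hirr : ∀ a oc, ¬ prec a oc oc) (htr : ∀ a, Transitive (prec a))
    (C : Set (∀ b, S b)) (hCne : C.Nonempty)
    (hunion : C = ⋃ a : A, ⋃ s ∈ C, BR' P prec a s)
    (hconn : ∀ s ∈ C, ∀ s' ∈ C, Relation.ReflTransGen (step P prec) s s') :
    ∀ a : A, {t : S a | ∃ s ∈ C, s a = t} ⊆
      BR3 P prec a (fun b => {t : S b.1 | ∃ s ∈ C, s b.1 = t}) := by
  intro a t ht
  obtain ⟨s, hsC, hst⟩ := ht
  -- BR' of a member of C is contained in C
  have hBRsub : ∀ b : A, ∀ u ∈ C, BR' P prec b u ⊆ C := by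
    intro b u huC v hv
    rw [hunion]
    exact Set.mem_iUnion.2 ⟨b, Set.mem_iUnion.2 ⟨u, Set.mem_iUnion.2 ⟨huC, hv⟩⟩⟩
  -- find a best response m for a against s
  have hwf : WellFounded (fun x y : S a =>
      prec a (P (Function.update s a y)) (P (Function.update s a x))) := by
    have : IsTrans (S a) (fun x y : S a =>
        prec a (P (Function.update s a y)) (P (Function.update s a x))) :=
      ⟨fun x y z hxy hyz => htr a hyz hxy⟩
    have : IsIrrefl (S a) (fun x y : S a =>
        prec a (P (Function.update s a y)) (P (Function.update s a x))) :=
      ⟨fun x => hirr a _⟩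
    exact Finite.wellFounded_of_trans_of_irrefl _
  obtain ⟨m, -, hm⟩ := hwf.has_min Set.univ ⟨Classical.arbitrary _, trivial⟩
  have hmbest : ∀ u : S a, ¬ prec a (P (Function.update s a m)) (P (Function.update s a u)) :=
    fun u => hm u trivial
  set s' : ∀ b, S b := Function.update s a m with hs'
  have hs'BR : s' ∈ BR' P prec a s := by
    constructor
    · intro b hb; simp [hs', Function.update, hb]
    · intro u
      have : Function.update s a (s' a) = Function.update s a m := by
        simp [hs']
      rw [this]; exact hmbest u
  have hs'C : s' ∈ C := hBRsub a s hsC hs'BR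
  -- the invariant along the path from s' to s
  have key : ∀ u, Relation.ReflTransGen (step P prec) s' u →
      u ∈ C ∧ ∃ w ∈ C, w a = u a ∧
        ∀ v : S a, ¬ prec a (P w) (P (Function.update w a v)) := by
    intro u hpath
    induction hpath with
    | refl =>
      refine ⟨hs'C, s', hs'C, rfl, ?_⟩
      intro v
      have h2 : Function.update s' a v = Function.update s a v := by
        simp [hs', Function.update_idem]
      have h3 : ∀ w : S a, ¬ prec a (P s') (P (Function.update s a w)) := fun w => hmbest w
      rw [h2]
      exact h3 v
    | @tail x y hx hstep ih =>
      obtain ⟨hxC, w, hwC, hwa, hwbest⟩ := ih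
      obtain ⟨b, hyBR⟩ := hstep
      have hyC : y ∈ C := hBRsub b x hxC hyBR
      by_cases hb : b = a
      · subst hb
        refine ⟨hyC, y, hyC, rfl, ?_⟩
        have hyx : y = Function.update x b (y b) := by
          funext d
          by_cases hd : d = b
          · subst hd; simp
          · simp [Function.update, hd, hyBR.1 d hd]
        intro v
        have h4 : Function.update y b v = Function.update x b v := by
          rw [hyx]; simp [Function.update_idem]
        rw [h4]
        have h5 := hyBR.2 v
        rw [← hyx] at h5
        exact h5
      · exact ⟨hyC, w, hwC, hwa.trans (hyBR.1 a (fun h => hb h.symm)).symm, hwbest⟩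
  obtain ⟨-, w, hwC, hwa, hwbest⟩ := key s (hconn s' hs'C s hsC)
  refine ⟨fun b => w b.1, fun b => ⟨w, hwC, rfl⟩, ?_⟩
  intro v
  rw [combine_eq_update, combine_eq_update, ← hst, ← hwa, Function.update_eq_self]
  exact hwbest v
end
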